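/- Let m ≥ 1 and let T⁽¹⁾ and T⁽²⁾ be distinct non-self-overlapping m-bit templates. For d with 1 ≤ d ≤ m−1 define e_d = 1 if T⁽¹⁾(i) = T⁽²⁾(i+d) for all i < m−d and e_d = 0 otherwise, and define e_{−d} = 1 if T⁽¹⁾(i+d) = T⁽²⁾(i) for all i < m−d and e_{−d} = 0 otherwise. Let c⁽¹⁾_M and c⁽²⁾_M be the occurrence counts of T⁽¹⁾ and T⁽²⁾ in a block B drawn uniformly at random from the 2^M equiprobable M-bit blocks. Then, as M → ∞, the correlation coefficient Cov(c⁽¹⁾_M, c⁽²⁾_M)/√(Var(c⁽¹⁾_M)·Var(c⁽²⁾_M)) converges to (−2m + 1 + Σ_{d=1}^{m−1} 2^{m−d}(e_d + e_{−d})) / (2^m − 2m + 1). -/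

import Mathlib

/-!
Write `occCount T B` as the sum over positions `k` of the indicators of "`T` occurs at `k`".
The covariance of two counts is then a double sum of covariances of indicators, which depend
only on the shift `d` between the two positions. Windows at shift `d ≥ m` are disjoint, so the
indicators are independent; for `d < m` both templates occur with probability `e · 2^-(m+d)`, where
`e ∈ {0, 1}` records whether the templates agree on the overlap. Hence the covariance and both
variances are, for large `M`, affine in the number `M + 1 - m` of positions, with slopes given by
the `e_{±d}` (for a variance, non-self-overlap leaves only `d = 0`), and the correlation
coefficient tends to the ratio of these slopes.
-/

open scoped Classical

/-- `T` occurs in the block `B` at position `k`: `B (k+i) = T i` for all `i < m`. -/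
def occursAt {m M : ℕ} (T : Fin m → Bool) (B : Fin M → Bool) (k : ℕ) : Prop :=
  ∀ i : Fin m, ∀ h : k + i.1 < M, B ⟨k + i.1, h⟩ = T i

/-- The number of occurrences of the template `T` in the block `B`. -/
noncomputable def occCount {m M : ℕ} (T : Fin m → Bool) (B : Fin M → Bool) : ℕ :=
  ((Finset.range (M + 1 - m)).filter (fun k => occursAt T B k)).card

/-- `T` is non-self-overlapping. -/
def NonSelfOverlapping {m : ℕ} (T : Fin m → Bool) : Prop :=
  ∀ k : ℕ, 1 ≤ k → k ≤ m - 1 → ∃ i : ℕ, ∃ h : i < m - k,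
    T ⟨i, by omega⟩ ≠ T ⟨i + k, by omega⟩

/-- Expectation of `f` when the block is drawn uniformly from the `2^M` `M`-bit blocks. -/
noncomputable def unifExp (M : ℕ) (f : (Fin M → Bool) → ℝ) : ℝ :=
  (∑ B : Fin M → Bool, f B) / 2 ^ M

/-- Variance of `f` under the uniform distribution on `M`-bit blocks. -/
noncomputable def unifVar (M : ℕ) (f : (Fin M → Bool) → ℝ) : ℝ :=
  unifExp M (fun B => f B ^ 2) - (unifExp M f) ^ 2

/-- Covariance of `f` and `g` under the uniform distribution on `M`-bit blocks. -/
noncomputable def unifCov (M : ℕ) (f g : (Fin M → Bool) → ℝ) : ℝ :=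
  unifExp M (fun B => f B * g B) - unifExp M f * unifExp M g

/-- `e_d` for `d ≥ 1`: equals `1` if `T¹(i) = T²(i+d)` for all `i < m - d`, else `0`. -/
noncomputable def ePlus {m : ℕ} (T1 T2 : Fin m → Bool) (d : ℕ) : ℝ :=
  if ∀ i : ℕ, ∀ h : i < m - d, T1 ⟨i, by omega⟩ = T2 ⟨i + d, by omega⟩ then 1 else 0

/-- `e_{-d}` for `d ≥ 1`: equals `1` if `T¹(i+d) = T²(i)` for all `i < m - d`, else `0`. -/
noncomputable def eMinus {m : ℕ} (T1 T2 : Fin m → Bool) (d : ℕ) : ℝ :=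
  if ∀ i : ℕ, ∀ h : i < m - d, T1 ⟨i + d, by omega⟩ = T2 ⟨i, by omega⟩ then 1 else 0

open Finset Filter Topology

theorem card_filter_forall_mem_eq {α : Type*} [Fintype α] [DecidableEq α] (A : Finset α)
    (g : α → Bool) :
    #{B : α → Bool | ∀ x ∈ A, B x = g x} = 2 ^ #Aᶜ := by
  have : ({B : α → Bool | ∀ x ∈ A, B x = g x} : Finset _) =
      Fintype.piFinset fun x => if x ∈ A then {g x} else univ := by
    ext B
    simp only [mem_filter, mem_univ, true_and, Fintype.mem_piFinset]
    refine forall_congr' fun x => ?_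
    split_ifs <;> simp [*]
  rw [this, Fintype.card_piFinset]
  simp [apply_ite card, prod_ite, filter_not, compl_eq_univ_sdiff]

theorem unifExp_ite (M : ℕ) (p : (Fin M → Bool) → Prop) [DecidablePred p] :
    unifExp M (fun B => if p B then 1 else 0) = #{B | p B} / 2 ^ M := by
  rw [unifExp, natCast_card_filter]

theorem unifExp_forall_mem_eq {M : ℕ} (A : Finset (Fin M)) (g : Fin M → Bool) :
    unifExp M (fun B => if ∀ x ∈ A, B x = g x then 1 else 0) = 2⁻¹ ^ #A := by
  -- the two sides carry different `Decidable` instances of the same predicate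
  have hcard : #{B : Fin M → Bool | ∀ x ∈ A, B x = g x} = 2 ^ #Aᶜ := by
    convert card_filter_forall_mem_eq A g
  have hM : (2 : ℝ) ^ M = 2 ^ #Aᶜ * 2 ^ #A := by
    rw [← pow_add, card_compl_add_card, Fintype.card_fin]
  rw [unifExp_ite, hcard, hM, inv_pow]
  push_cast
  field_simp

theorem unifExp_sum (M : ℕ) {ι : Type*} (s : Finset ι) (f : ι → (Fin M → Bool) → ℝ) :
    unifExp M (fun B => ∑ i ∈ s, f i B) = ∑ i ∈ s, unifExp M (f i) := by
  simp only [unifExp, ← sum_div]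
  rw [sum_comm]

theorem unifCov_sum_sum (M : ℕ) {ι κ : Type*} (s : Finset ι) (t : Finset κ)
    (f : ι → (Fin M → Bool) → ℝ) (g : κ → (Fin M → Bool) → ℝ) :
    unifCov M (fun B => ∑ i ∈ s, f i B) (fun B => ∑ j ∈ t, g j B) =
      ∑ i ∈ s, ∑ j ∈ t, unifCov M (f i) (g j) := by
  simp only [unifCov, sum_mul_sum, unifExp_sum, sum_sub_distrib]

theorem unifCov_comm (M : ℕ) (f g : (Fin M → Bool) → ℝ) : unifCov M f g = unifCov M g f := by
  simp only [unifCov, mul_comm]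

theorem unifVar_eq_unifCov (M : ℕ) (f : (Fin M → Bool) → ℝ) : unifVar M f = unifCov M f f := by
  simp only [unifVar, unifCov, sq]

section DoubleSum

variable {R : Type*} [AddCommMonoid R]

theorem sum_range_sum_range_ite_le (N : ℕ) (f : ℕ → R) :
    ∑ k ∈ range N, ∑ l ∈ range N, (if k ≤ l then f (l - k) else 0) =
      ∑ d ∈ range N, (N - d) • f d := by
  have hrow : ∀ k, ∑ l ∈ range N, (if k ≤ l then f (l - k) else 0) =
      ∑ d ∈ range (N - k), f d := by
    intro k
    rw [← sum_filter, range_eq_Ico, Ico_filter_le, max_eq_right k.zero_le,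
      sum_Ico_eq_sum_range]
    simp only [add_tsub_cancel_left]
  simp_rw [hrow]
  rw [sum_comm' (t' := range N) (s' := fun d => range (N - d)) (by intros; simp; omega)]
  simp only [sum_const, card_range]

theorem sum_range_sum_range_ite (N : ℕ) (f g : ℕ → R) :
    ∑ k ∈ range N, ∑ l ∈ range N, (if k ≤ l then f (l - k) else g (k - l)) =
      ∑ d ∈ range N, (N - d) • f d + ∑ d ∈ Ico 1 N, (N - d) • g d := by
  have hsplit : ∀ k l, (if k ≤ l then f (l - k) else g (k - l)) =
      (if k ≤ l then f (l - k) else 0) +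
        if l ≤ k then (if 0 < k - l then g (k - l) else 0) else 0 := by
    intro k l
    split_ifs <;> first | omega | simp
  simp_rw [hsplit, sum_add_distrib]
  rw [sum_range_sum_range_ite_le, sum_comm' (t' := range N) (s' := fun _ => range N) (by simp),
    sum_range_sum_range_ite_le N fun d => if 0 < d then g d else 0]
  simp_rw [smul_ite, smul_zero]
  rw [← sum_filter]
  congr 2
  ext d
  simp only [mem_filter, mem_range, mem_Ico]
  omega

end DoubleSum

theorem card_Ico_union_Ico {k l : ℕ} (m : ℕ) (hkl : k ≤ l) :
    #(Ico k (k + m) ∪ Ico l (l + m)) = m + min (l - k) m := by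
  have := card_union_add_card_inter (Ico k (k + m)) (Ico l (l + m))
  rw [Ico_inter_Ico, Nat.card_Ico, Nat.card_Ico, Nat.card_Ico] at this
  omega

theorem tendsto_sum_tsub_nsmul_div (s : Finset ℕ) (x : ℕ → ℝ) :
    Tendsto (fun N : ℕ => (∑ d ∈ s, (N - d) • x d) / N) atTop (𝓝 (∑ d ∈ s, x d)) := by
  simp_rw [sum_div]
  refine tendsto_finsetSum s fun d _ => ?_
  have hratio : Tendsto (fun N : ℕ => ((N - d : ℕ) : ℝ) / N) atTop (𝓝 1) := by
    have := tendsto_const_nhds (x := (1 : ℝ)).sub (tendsto_const_div_atTop_nhds_zero_nat (d : ℝ))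
    rw [sub_zero] at this
    refine this.congr' ?_
    filter_upwards [eventually_gt_atTop d] with N hN
    have hN0 : (N : ℝ) ≠ 0 := by exact_mod_cast (d.zero_le.trans_lt hN).ne'
    rw [Nat.cast_sub hN.le, sub_div, div_self hN0]
  simpa only [nsmul_eq_mul, mul_div_right_comm, one_mul] using hratio.mul_const (x d)

theorem tendsto_div_sqrt_mul_of_tendsto_div {α : Type*} {l : Filter α} {φ f g h : α → ℝ}
    {a b c : ℝ} (hφ : ∀ᶠ x in l, 0 < φ x) (hf : Tendsto (fun x => f x / φ x) l (𝓝 a))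
    (hg : Tendsto (fun x => g x / φ x) l (𝓝 b)) (hh : Tendsto (fun x => h x / φ x) l (𝓝 c))
    (hbc : 0 < b * c) :
    Tendsto (fun x => f x / √(g x * h x)) l (𝓝 (a / √(b * c))) := by
  refine (hf.div (hg.mul hh).sqrt (Real.sqrt_ne_zero'.2 hbc)).congr' ?_
  filter_upwards [hφ] with x hx
  rw [Pi.div_apply, div_mul_div_comm, Real.sqrt_div' _ (mul_self_nonneg _),
    Real.sqrt_mul_self hx.le, div_div_div_cancel_right₀ hx.ne']

section Templates

variable {m M : ℕ}

def templateBit (T : Fin m → Bool) (n : ℕ) : Bool :=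
  if h : n < m then T ⟨n, h⟩ else false

theorem occursAt_iff (T : Fin m → Bool) (B : Fin M → Bool) (k : ℕ) :
    occursAt T B k ↔ ∀ x : Fin M, (x : ℕ) ∈ Ico k (k + m) → B x = templateBit T (x - k) := by
  simp only [mem_Ico]
  constructor
  · intro h x hx
    have hxk : x - k < m := by omega
    simpa [templateBit, hxk, Nat.add_sub_cancel' hx.1] using h ⟨x - k, hxk⟩ (by simp only; omega)
  · intro h i hi
    simpa [templateBit] using h ⟨k + i, hi⟩ (by simp)

theorem occCount_eq_sum (T : Fin m → Bool) (B : Fin M → Bool) :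
    (occCount T B : ℝ) = ∑ k ∈ range (M + 1 - m), if occursAt T B k then 1 else 0 :=
  natCast_card_filter _ _

theorem eMinus_of_le (T1 T2 : Fin m → Bool) {d : ℕ} (hd : m ≤ d) :
    eMinus T1 T2 d = 1 :=
  if_pos fun i hi => by omega

theorem eMinus_self_zero (T : Fin m → Bool) : eMinus T T 0 = 1 :=
  if_pos fun _ _ => rfl

theorem eMinus_zero_of_ne {T1 T2 : Fin m → Bool} (hT : T1 ≠ T2) :
    eMinus T1 T2 0 = 0 :=
  if_neg fun h => hT (funext fun i => h i i.2)

theorem eMinus_self_of_nonSelfOverlapping {T : Fin m → Bool}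
    (hT : NonSelfOverlapping T) {d : ℕ} (hd1 : 1 ≤ d) (hd : d ≤ m - 1) : eMinus T T d = 0 :=
  if_neg fun h => by
    obtain ⟨i, hi, hne⟩ := hT d hd1 hd
    exact hne (h i hi).symm

theorem ePlus_eq_eMinus (T1 T2 : Fin m → Bool) (d : ℕ) :
    ePlus T1 T2 d = eMinus T2 T1 d :=
  if_congr ⟨fun h i hi => (h i hi).symm, fun h i hi => (h i hi).symm⟩ rfl rfl

theorem eMinus_eq_ite_templateBit (T1 T2 : Fin m → Bool) {k l : ℕ} (hkl : k ≤ l) :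
    eMinus T1 T2 (l - k) =
      if ∀ n ∈ Ico l (k + m), templateBit T1 (n - k) = templateBit T2 (n - l) then 1 else 0 := by
  refine if_congr ⟨fun h n hn => ?_, fun h i hi => ?_⟩ rfl rfl
  · rw [mem_Ico] at hn
    have := h (n - l) (by omega)
    simp only [templateBit, show n - k < m by omega, show n - l < m by omega, dite_true]
    convert this using 3
    omega
  · have := h (l + i) (by rw [mem_Ico]; omega)
    simp only [templateBit, show l + i - k < m by omega, show l + i - l < m by omega,
      dite_true] at this
    convert this using 3 <;> omega

theorem occursAt_and_occursAt_iff (T1 T2 : Fin m → Bool) (B : Fin M → Bool) {k l : ℕ}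
    (hkl : k ≤ l) (hl : l + m ≤ M) :
    occursAt T1 B k ∧ occursAt T2 B l ↔
      (∀ n ∈ Ico l (k + m), templateBit T1 (n - k) = templateBit T2 (n - l)) ∧
        ∀ x : Fin M, (x : ℕ) ∈ Ico k (k + m) ∪ Ico l (l + m) →
          B x = if (x : ℕ) < l then templateBit T1 (x - k) else templateBit T2 (x - l) := by
  simp only [occursAt_iff, mem_union, mem_Ico]
  constructor
  · rintro ⟨h1, h2⟩
    refine ⟨fun n hn => ?_, fun x hx => ?_⟩
    · have hnM : n < M := by omega
      rw [← h1 ⟨n, hnM⟩ (by simp only; omega), h2 ⟨n, hnM⟩ (by simp only; omega)]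
    · split_ifs with hxl
      · exact h1 x (by omega)
      · exact h2 x (by omega)
  · rintro ⟨hc, h⟩
    refine ⟨fun x hx => ?_, fun x hx => ?_⟩
    · rw [h x (by omega)]
      split_ifs with hxl
      · rfl
      · exact (hc x (by omega)).symm
    · rw [h x (by omega), if_neg (by omega)]

theorem unifExp_occursAt_and_occursAt (T1 T2 : Fin m → Bool) {k l : ℕ}
    (hkl : k ≤ l) (hl : l + m ≤ M) :
    unifExp M (fun B => if occursAt T1 B k ∧ occursAt T2 B l then 1 else 0) =
      eMinus T1 T2 (l - k) * 2⁻¹ ^ (m + min (l - k) m) := by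
  have hS : ∀ x ∈ Ico k (k + m) ∪ Ico l (l + m), x < M := by
    intro x hx
    simp only [mem_union, mem_Ico] at hx
    omega
  simp_rw [occursAt_and_occursAt_iff T1 T2 _ hkl hl, ← mem_attachFin hS, ite_and,
    eMinus_eq_ite_templateBit T1 T2 hkl]
  split_ifs
  · rw [unifExp_forall_mem_eq, card_attachFin, card_Ico_union_Ico m hkl, one_mul]
  · simp [unifExp]

theorem unifExp_occursAt (T : Fin m → Bool) {k : ℕ} (hk : k + m ≤ M) :
    unifExp M (fun B => if occursAt T B k then 1 else 0) = 2⁻¹ ^ m := by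
  simpa [eMinus_self_zero] using unifExp_occursAt_and_occursAt T T le_rfl hk

noncomputable def occCov (T1 T2 : Fin m → Bool) (d : ℕ) : ℝ :=
  eMinus T1 T2 d * 2⁻¹ ^ (m + min d m) - 2⁻¹ ^ (2 * m)

theorem occCov_of_le (T1 T2 : Fin m → Bool) {d : ℕ} (hd : m ≤ d) : occCov T1 T2 d = 0 := by
  rw [occCov, eMinus_of_le T1 T2 hd, min_eq_right hd, two_mul, one_mul, sub_self]

theorem unifCov_occursAt (T1 T2 : Fin m → Bool) {k l : ℕ} (hkl : k ≤ l)
    (hl : l + m ≤ M) :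
    unifCov M (fun B => if occursAt T1 B k then 1 else 0)
      (fun B => if occursAt T2 B l then 1 else 0) = occCov T1 T2 (l - k) := by
  simp only [unifCov, ite_zero_mul_ite_zero, one_mul]
  rw [unifExp_occursAt_and_occursAt T1 T2 hkl hl, unifExp_occursAt T1 (by omega),
    unifExp_occursAt T2 hl, occCov, ← pow_add, two_mul]

theorem unifCov_occCount (T1 T2 : Fin m → Bool) (hM : 2 * m ≤ M + 1) :
    unifCov M (fun B => (occCount T1 B : ℝ)) (fun B => (occCount T2 B : ℝ)) =
      ∑ d ∈ range m, (M + 1 - m - d) • occCov T1 T2 d +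
        ∑ d ∈ Ico 1 m, (M + 1 - m - d) • occCov T2 T1 d := by
  simp_rw [occCount_eq_sum]
  rw [unifCov_sum_sum]
  have hpair : ∀ k ∈ range (M + 1 - m), ∀ l ∈ range (M + 1 - m),
      unifCov M (fun B => if occursAt T1 B k then 1 else 0)
        (fun B => if occursAt T2 B l then 1 else 0) =
      if k ≤ l then occCov T1 T2 (l - k) else occCov T2 T1 (k - l) := by
    intro k hk l hl
    rw [mem_range] at hk hl
    split_ifs with hkl
    · exact unifCov_occursAt T1 T2 hkl (by omega)
    · rw [unifCov_comm]
      exact unifCov_occursAt T2 T1 (by omega) (by omega)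
  have hvanish : ∀ (T T' : Fin m → Bool) (d : ℕ), m ≤ d →
      (M + 1 - m - d) • occCov T T' d = 0 := fun T T' d hd => by
    rw [occCov_of_le T T' hd, smul_zero]
  have hmN : m ≤ M + 1 - m := by omega
  rw [sum_congr rfl fun k hk => sum_congr rfl (hpair k hk), sum_range_sum_range_ite,
    ← sum_subset (range_subset_range.2 hmN) fun d _ hd => hvanish T1 T2 d (by simpa using hd),
    ← sum_subset (Ico_subset_Ico_right hmN) fun d hd hd' => hvanish T2 T1 d (by
      simp only [mem_Ico] at hd hd'
      omega)]

noncomputable def occCovRate (T1 T2 : Fin m → Bool) : ℝ :=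
  ∑ d ∈ range m, occCov T1 T2 d + ∑ d ∈ Ico 1 m, occCov T2 T1 d

theorem tendsto_unifCov_occCount_div (T1 T2 : Fin m → Bool) :
    Tendsto (fun M => unifCov M (fun B => (occCount T1 B : ℝ)) (fun B => (occCount T2 B : ℝ)) /
      ((M + 1 - m : ℕ) : ℝ)) atTop (𝓝 (occCovRate T1 T2)) := by
  have hN : Tendsto (fun M : ℕ => M + 1 - m) atTop atTop :=
    (tendsto_sub_atTop_nat m).comp (tendsto_add_atTop_nat 1)
  refine (((tendsto_sum_tsub_nsmul_div (range m) _).add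
    (tendsto_sum_tsub_nsmul_div (Ico 1 m) _)).comp hN).congr' ?_
  filter_upwards [eventually_ge_atTop (2 * m)] with M hM
  rw [Function.comp_apply, unifCov_occCount T1 T2 (by omega), add_div]

theorem occCovRate_eq (hm : 1 ≤ m) (T1 T2 : Fin m → Bool) :
    occCovRate T1 T2 = 2⁻¹ ^ (2 * m) * (eMinus T1 T2 0 * 2 ^ m - 2 * m + 1 +
      ∑ d ∈ Icc 1 (m - 1), 2 ^ (m - d) * (ePlus T1 T2 d + eMinus T1 T2 d)) := by
  have hpow : ∀ d ≤ m, (2 : ℝ)⁻¹ ^ (m + d) = 2⁻¹ ^ (2 * m) * 2 ^ (m - d) := fun d hd => by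
    rw [show 2 * m = m + d + (m - d) by omega, pow_add _ (m + d), mul_assoc, ← mul_pow,
      inv_mul_cancel₀ two_ne_zero, one_pow, mul_one]
  have hpair : ∀ d ∈ Ico 1 m, occCov T1 T2 d + occCov T2 T1 d =
      2⁻¹ ^ (2 * m) * (2 ^ (m - d) * (ePlus T1 T2 d + eMinus T1 T2 d) - 2) := fun d hd => by
    rw [mem_Ico] at hd
    rw [occCov, occCov, min_eq_left hd.2.le, hpow d hd.2.le, ePlus_eq_eMinus]
    ring
  have hIcc : Icc 1 (m - 1) = Ico 1 m := by
    ext d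
    simp only [mem_Icc, mem_Ico]
    omega
  rw [occCovRate, sum_range_eq_add_Ico _ hm, add_assoc, ← sum_add_distrib, sum_congr rfl hpair,
    ← mul_sum, sum_sub_distrib, sum_const, Nat.card_Ico, hIcc, occCov, min_eq_left m.zero_le,
    hpow 0 m.zero_le, Nat.sub_zero, nsmul_eq_mul, Nat.cast_sub hm]
  ring

theorem occCovRate_of_ne (hm : 1 ≤ m) {T1 T2 : Fin m → Bool} (hT : T1 ≠ T2) :
    occCovRate T1 T2 = 2⁻¹ ^ (2 * m) * (-2 * m + 1 +
      ∑ d ∈ Icc 1 (m - 1), 2 ^ (m - d) * (ePlus T1 T2 d + eMinus T1 T2 d)) := by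
  rw [occCovRate_eq hm, eMinus_zero_of_ne hT]
  ring

theorem occCovRate_self (hm : 1 ≤ m) {T : Fin m → Bool} (hT : NonSelfOverlapping T) :
    occCovRate T T = 2⁻¹ ^ (2 * m) * (2 ^ m - 2 * m + 1) := by
  have hvanish : ∀ d ∈ Icc 1 (m - 1), (2 : ℝ) ^ (m - d) * (ePlus T T d + eMinus T T d) = 0 :=
    fun d hd => by
      rw [mem_Icc] at hd
      rw [ePlus_eq_eMinus, eMinus_self_of_nonSelfOverlapping hT hd.1 hd.2]
      ring
  rw [occCovRate_eq hm, eMinus_self_zero, sum_eq_zero hvanish]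
  ring

end Templates

theorem correlation_coefficient_limit (m : ℕ) (hm : 1 ≤ m) (T1 T2 : Fin m → Bool)
    (hT : T1 ≠ T2) (h1 : NonSelfOverlapping T1) (h2 : NonSelfOverlapping T2) :
    Filter.Tendsto (fun M : ℕ =>
        unifCov M (fun B => (occCount T1 B : ℝ)) (fun B => (occCount T2 B : ℝ))
          / Real.sqrt (unifVar M (fun B => (occCount T1 B : ℝ))
              * unifVar M (fun B => (occCount T2 B : ℝ))))
      Filter.atTop
      (nhds ((-2 * (m : ℝ) + 1
          + ∑ d ∈ Finset.Icc 1 (m - 1), 2 ^ (m - d) * (ePlus T1 T2 d + eMinus T1 T2 d))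
        / (2 ^ m - 2 * (m : ℝ) + 1))) := by
  have hden : 0 < (2 : ℝ) ^ m - 2 * m + 1 := by
    have h2m : 2 * m ≤ 2 ^ m := by
      obtain ⟨n, rfl⟩ := Nat.exists_eq_add_of_le' hm
      have := n.lt_two_pow_self
      rw [pow_succ]
      omega
    have : (2 * m : ℝ) ≤ 2 ^ m := by exact_mod_cast h2m
    linarith
  have hrate : 0 < (2 : ℝ)⁻¹ ^ (2 * m) * (2 ^ m - 2 * m + 1) := by positivity
  have hvar : ∀ T : Fin m → Bool, Tendsto (fun M => unifVar M (fun B => (occCount T B : ℝ)) /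
      ((M + 1 - m : ℕ) : ℝ)) atTop (𝓝 (occCovRate T T)) := fun T => by
    simpa only [unifVar_eq_unifCov] using tendsto_unifCov_occCount_div T T
  have hN : ∀ᶠ M : ℕ in atTop, (0 : ℝ) < (M + 1 - m : ℕ) := by
    filter_upwards [eventually_ge_atTop m] with M hM
    exact_mod_cast (by omega : 0 < M + 1 - m)
  have key := tendsto_div_sqrt_mul_of_tendsto_div hN (tendsto_unifCov_occCount_div T1 T2)
    (hvar T1) (hvar T2) (by rw [occCovRate_self hm h1, occCovRate_self hm h2]; positivity)
  rwa [occCovRate_of_ne hm hT, occCovRate_self hm h1, occCovRate_self hm h2,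
    Real.sqrt_mul_self hrate.le, mul_div_mul_left _ _ (by positivity)] at key
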